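/- There exist constants C > 0 and L₀ > r₀ such that for every L ≥ L₀, every i ∈ {1,2,3}, every sign μ ∈ {+,−}, and every point x of the face F^{(i)}_{μ,L}, | H(x) − Σ_{k≠i} κ^{(k)}(x) | ≤ C·L^{−2τ−1}, where for each k ≠ i, κ^{(k)}(x) is the geodesic curvature at x of the slicing curve C^{(k)}_{x^k} through x. (The mean curvature of a face equals the sum of the geodesic curvatures of the two coordinate slicing curves through the point, up to O(L^{−2τ−1}).) -/

import Mathlib

open Real MeasureTheory

noncomputable section

/-- Points of ℝ³. -/
abbrev Pt : Type := Fin 3 → ℝ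

/-- The Euclidean norm |x| on ℝ³. -/
def enorm3 (x : Pt) : ℝ := Real.sqrt (∑ i, x i ^ 2)

/-- The sign μ ∈ {+,-} as a real number. -/
def sgn (μ : Bool) : ℝ := if μ then 1 else -1

/-- The smaller of the two indices different from `i`. -/
def lo (i : Fin 3) : Fin 3 := if i = 0 then 1 else 0

/-- The larger of the two indices different from `i`. -/
def hi (i : Fin 3) : Fin 3 := if i = 2 then 1 else 2

/-- The index different from both `i` and `a` (when `i ≠ a`). -/
def oth (i a : Fin 3) : Fin 3 := -(i + a)

/-- The partial derivative ∂ₖ g_{ij}. -/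
def dg (g : Pt → Matrix (Fin 3) (Fin 3) ℝ) (i j k : Fin 3) (x : Pt) : ℝ :=
  fderiv ℝ (fun y => g y i j) x (Pi.single k 1)

/-- The second partial derivative ∂ₗ ∂ₖ g_{ij}. -/
def ddg (g : Pt → Matrix (Fin 3) (Fin 3) ℝ) (i j k l : Fin 3) (x : Pt) : ℝ :=
  fderiv ℝ (dg g i j k) x (Pi.single l 1)

/-- The Christoffel symbols Γ^m_{ab} of the metric g. -/
def chris (g : Pt → Matrix (Fin 3) (Fin 3) ℝ) (m a b : Fin 3) (x : Pt) : ℝ :=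
  (1/2) * ∑ n, (g x)⁻¹ m n * (dg g n a b x + dg g n b a x - dg g a b n x)

/-- The asymptotic flatness hypotheses: on U = {|x| > r₀}, g is a symmetric
positive-definite C² matrix field with |g_{ij} - δ_{ij}| ≤ C₀|x|^{-τ},
|∂g| ≤ C₀|x|^{-τ-1}, |∂∂g| ≤ C₀|x|^{-τ-2}. -/
def AsymptFlat (τ r₀ C₀ : ℝ) (g : Pt → Matrix (Fin 3) (Fin 3) ℝ) : Prop :=
  (∀ x : Pt, r₀ < enorm3 x → (g x).IsSymm) ∧
  (∀ x : Pt, r₀ < enorm3 x → (g x).PosDef) ∧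
  (∀ i j : Fin 3, ContDiffOn ℝ 2 (fun x => g x i j) {x : Pt | r₀ < enorm3 x}) ∧
  (∀ x : Pt, r₀ < enorm3 x → ∀ i j : Fin 3,
    |g x i j - if i = j then 1 else 0| ≤ C₀ * enorm3 x ^ (-τ)) ∧
  (∀ x : Pt, r₀ < enorm3 x → ∀ i j k : Fin 3,
    |dg g i j k x| ≤ C₀ * enorm3 x ^ (-τ - 1)) ∧
  (∀ x : Pt, r₀ < enorm3 x → ∀ i j k l : Fin 3,
    |ddg g i j k l x| ≤ C₀ * enorm3 x ^ (-τ - 2))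

/-- The point of the face x^i = a with the two remaining coordinates
(in increasing order of index) equal to s and u. -/
def facePt (i : Fin 3) (a s u : ℝ) : Pt :=
  fun m => if m = i then a else if m = lo i then s else u

/-- The point of the edge x^i = a, x^j = b (i ≠ j) with remaining coordinate t. -/
def edgePt (i j : Fin 3) (a b t : ℝ) : Pt :=
  fun m => if m = i then a else if m = j then b else t

/-- ∫_{F^{(i)}_{μ,L}} f dσ₀ : the integral of f over the face F^{(i)}_{μ,L} of
∂Cube_L with respect to 2-dimensional Lebesgue measure. -/
def faceInt (i : Fin 3) (μ : Bool) (L : ℝ) (f : Pt → ℝ) : ℝ :=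
  ∫ s in (-L)..L, ∫ u in (-L)..L, f (facePt i (sgn μ * L) s u)

/-- det h, where h is the 2×2 submatrix of g obtained by deleting row and column i. -/
def hdet (g : Pt → Matrix (Fin 3) (Fin 3) ℝ) (i : Fin 3) (x : Pt) : ℝ :=
  g x (lo i) (lo i) * g x (hi i) (hi i) - g x (lo i) (hi i) * g x (hi i) (lo i)

/-- The area density √(det h) of dσ_g on the face with normal direction i. -/
def areaDens (g : Pt → Matrix (Fin 3) (Fin 3) ℝ) (i : Fin 3) (x : Pt) : ℝ :=
  Real.sqrt (hdet g i x)

/-- The entries (h⁻¹)^{ab} of the inverse of the 2×2 submatrix h of g obtained by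
deleting row and column i (meaningful for a, b ≠ i). -/
def hinv (g : Pt → Matrix (Fin 3) (Fin 3) ℝ) (i a b : Fin 3) (x : Pt) : ℝ :=
  (if a = b then g x (oth i a) (oth i a) else -(g x a b)) / hdet g i x

/-- The components ν^m = μ g^{mi}/√(g^{ii}) of the outward g-unit normal of the
face x^i = μL. -/
def nuc (g : Pt → Matrix (Fin 3) (Fin 3) ℝ) (i : Fin 3) (μ : Bool) (m : Fin 3) (x : Pt) : ℝ :=
  sgn μ * (g x)⁻¹ m i / Real.sqrt ((g x)⁻¹ i i)

/-- The mean curvature H = -Σ_{a,b≠i} (h⁻¹)^{ab} Σ_{m,n} Γ^m_{ab} g_{mn} ν^n of the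
face F^{(i)}_{μ,L} with respect to the outward unit normal ν. -/
def meanCurv (g : Pt → Matrix (Fin 3) (Fin 3) ℝ) (i : Fin 3) (μ : Bool) (x : Pt) : ℝ :=
  -∑ a, ∑ b, (if a = i ∨ b = i then 0 else
    hinv g i a b x * ∑ m, ∑ n, chris g m a b x * g x m n * nuc g i μ n x)

/-- The integrand Σ_{j,k}(g_{jk,j} - g_{jj,k}) ν^k of the ADM mass surface integral. -/
def admIntegrand (g : Pt → Matrix (Fin 3) (Fin 3) ℝ) (i : Fin 3) (μ : Bool) (x : Pt) : ℝ :=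
  ∑ j, ∑ k, (dg g j k j x - dg g j j k x) * nuc g i μ k x

/-- B(L): the ADM mass surface integral of g over ∂Cube_L. -/
def ADM (g : Pt → Matrix (Fin 3) (Fin 3) ℝ) (L : ℝ) : ℝ :=
  (1/(16*π)) * ∑ i, ∑ μ : Bool,
    faceInt i μ L (fun x => admIntegrand g i μ x * areaDens g i x)

/-- The angle θ^{(ij)}_{μ,λ} = arccos(μλ g^{ij}/√(g^{ii} g^{jj})) between the outward
unit normals of the two faces adjacent along the edge E^{(ij)}_{μ,λ,L}. -/
def thetaAngle (g : Pt → Matrix (Fin 3) (Fin 3) ℝ) (i j : Fin 3) (μ lam : Bool) (x : Pt) : ℝ :=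
  Real.arccos (sgn μ * sgn lam * (g x)⁻¹ i j / Real.sqrt ((g x)⁻¹ i i * (g x)⁻¹ j j))

/-- ∫_{E^{(ij)}_{μ,λ,L}} f ds_g : the integral of f over the edge x^i = μL, x^j = λL
of ∂Cube_L, with arclength element ds_g = √(g_{cc}) dt, c being the remaining index. -/
def edgeInt (g : Pt → Matrix (Fin 3) (Fin 3) ℝ) (i j : Fin 3) (μ lam : Bool) (L : ℝ)
    (f : Pt → ℝ) : ℝ :=
  ∫ t in (-L)..L, f (edgePt i j (sgn μ * L) (sgn lam * L) t) *
    Real.sqrt (g (edgePt i j (sgn μ * L) (sgn lam * L) t) (oth i j) (oth i j))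

/-- The components of the outward g-unit normal ν̄ of the slicing curve C^{(k)}_t
within the plane x^k = t, along its segment lying in the face x^i = μL:
ν̄^a = μ (h⁻¹)^{ai}/√((h⁻¹)^{ii}) for a ≠ k, ν̄^k = 0, h being the 2×2 submatrix
of g deleting row and column k. -/
def nubar (g : Pt → Matrix (Fin 3) (Fin 3) ℝ) (i k : Fin 3) (μ : Bool) (n : Fin 3)
    (x : Pt) : ℝ :=
  if n = k then 0 else sgn μ * hinv g k n i x / Real.sqrt (hinv g k i i x)

/-- The geodesic curvature κ^{(k)} = -(1/g_{jj}) Σ_{m,n} Γ^m_{jj} g_{mn} ν̄^n of the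
slicing curve C^{(k)}_t within the plane x^k = t, along its segment lying in the face
x^i = μL; here j = oth i k is the tangent coordinate direction. -/
def geodCurv (g : Pt → Matrix (Fin 3) (Fin 3) ℝ) (i k : Fin 3) (μ : Bool) (x : Pt) : ℝ :=
  -(1 / g x (oth i k) (oth i k)) *
    ∑ m, ∑ n, chris g m (oth i k) (oth i k) x * g x m n * nubar g i k μ n x

/-- ∫_{C^{(k)}_t} κ^{(k)} ds_g : the integral of the geodesic curvature of the slicing
curve C^{(k)}_t = ∂Cube_L ∩ {x^k = t}, as the sum over its four segments. -/
def curveCurvInt (g : Pt → Matrix (Fin 3) (Fin 3) ℝ) (k : Fin 3) (t L : ℝ) : ℝ :=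
  ∑ i, ∑ μ : Bool, if i = k then 0 else
    ∫ s in (-L)..L,
      geodCurv g i k μ (edgePt i k (sgn μ * L) t s) *
        Real.sqrt (g (edgePt i k (sgn μ * L) t s) (oth i k) (oth i k))

/-- The turning angle arccos(-μλ g_{ij}/√(g_{ii} g_{jj})) of the slicing curve
C^{(k)}_t at its vertex (x^i, x^j) = (μL, λL), where {i,j} = {1,2,3} \ {k}. -/
def turnAngle (g : Pt → Matrix (Fin 3) (Fin 3) ℝ) (k : Fin 3) (μ lam : Bool)
    (t L : ℝ) : ℝ :=
  Real.arccos (-(sgn μ * sgn lam) *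
      g (edgePt (lo k) (hi k) (sgn μ * L) (sgn lam * L) t) (lo k) (hi k) /
    Real.sqrt (g (edgePt (lo k) (hi k) (sgn μ * L) (sgn lam * L) t) (lo k) (lo k) *
               g (edgePt (lo k) (hi k) (sgn μ * L) (sgn lam * L) t) (hi k) (hi k)))

/-- β^{⟨k⟩}_t : the sum of the four turning angles of the slicing curve C^{(k)}_t. -/
def betaSum (g : Pt → Matrix (Fin 3) (Fin 3) ℝ) (k : Fin 3) (t L : ℝ) : ℝ :=
  ∑ μ : Bool, ∑ lam : Bool, turnAngle g k μ lam t L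

/-- The g-Laplacian Δ_g x^k = -Σ_{a,b} g^{ab} Γ^k_{ab} of the coordinate function x^k. -/
def lapCoord (g : Pt → Matrix (Fin 3) (Fin 3) ℝ) (k : Fin 3) (x : Pt) : ℝ :=
  -∑ a, ∑ b, (g x)⁻¹ a b * chris g k a b x

/-- The directional derivative ∂_m √(g^{kk}) of |∇x^k| = √(g^{kk}). -/
def dlenGrad (g : Pt → Matrix (Fin 3) (Fin 3) ℝ) (k m : Fin 3) (x : Pt) : ℝ :=
  fderiv ℝ (fun y => Real.sqrt ((g y)⁻¹ k k)) x (Pi.single m 1)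

/-!
Both `H` and each `κ^{(k)}` are linear in the Christoffel symbols `Γ^m_{ab}(x)`, with coefficients
that are smooth functions of the matrix `g(x)`. For `g(x) = 1` one has `H = -μ Σ_{a ≠ i} Γ^i_{aa}`
and `κ^{(k)} = -μ Γ^i_{jj}`, `j` being the third index, so the coefficients of `H - Σ_k κ^{(k)}`
vanish at the identity and are `O(|g(x) - 1|) = O(L^{-τ})`, while `Γ(x) = O(L^{-τ-1})`.
-/

open Filter Topology

-- The ℓ∞-operator norm makes matrices a normed algebra, so that inversion is differentiable.
attribute [local instance] Matrix.linftyOpNormedAddCommGroup Matrix.linftyOpNormedSpace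
  Matrix.linftyOpNormedRing Matrix.linftyOpNormedAlgebra

lemma abs_sum_le_card_mul {ι : Type*} [Fintype ι] {f : ι → ℝ} {B : ℝ} (h : ∀ i, |f i| ≤ B) :
    |∑ i, f i| ≤ Fintype.card ι * B :=
  calc |∑ i, f i| ≤ ∑ i, |f i| := Finset.abs_sum_le_sum_abs _ _
    _ ≤ Finset.univ.card • B := Finset.sum_le_card_nsmul _ _ _ fun i _ => h i
    _ = Fintype.card ι * B := by rw [nsmul_eq_mul, Finset.card_univ]

lemma Matrix.linfty_opNorm_le_of_abs_le {m n : Type*} [Fintype m] [Fintype n]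
    (B : Matrix m n ℝ) {r : ℝ} (hr : 0 ≤ r) (h : ∀ i j, |B i j| ≤ r) :
    ‖B‖ ≤ Fintype.card n * r := by
  lift r to NNReal using hr
  rw [Matrix.linfty_opNorm_def]
  have : (Finset.univ.sup fun i => ∑ j, ‖B i j‖₊) ≤ Fintype.card n * r :=
    Finset.sup_le fun i _ => calc
      ∑ j, ‖B i j‖₊ ≤ Finset.univ.card • r :=
        Finset.sum_le_card_nsmul _ _ _ fun j _ => (show ‖B i j‖₊ ≤ r from h i j)
      _ = Fintype.card n * r := by rw [nsmul_eq_mul, Finset.card_univ]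
  exact_mod_cast this

lemma le_enorm3_facePt (i : Fin 3) (μ : Bool) (L s u : ℝ) :
    L ≤ enorm3 (facePt i (sgn μ * L) s u) := by
  refine Real.le_sqrt_of_sq_le ?_
  calc L ^ 2 = facePt i (sgn μ * L) s u i ^ 2 := by cases μ <;> simp [facePt, sgn]
    _ ≤ ∑ m, facePt i (sgn μ * L) s u m ^ 2 :=
      Finset.single_le_sum (fun m _ => sq_nonneg _) (Finset.mem_univ i)

lemma Matrix.differentiableAt_inv {n : Type*} [Fintype n] [DecidableEq n] {A : Matrix n n ℝ}
    (hA : IsUnit A) : DifferentiableAt ℝ (fun B : Matrix n n ℝ => B⁻¹) A := by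
  simp_rw [Matrix.nonsing_inv_eq_ringInverse]
  exact differentiableAt_inverse hA

/- The coefficients of `Γ^m_{ab}(x)` in `H(x)`, in `κ^{(k)}(x)` and in `H(x) - Σ_k κ^{(k)}(x)`, as
functions of `A = g x`: the defining formulas read the metric only at the point, so they are
evaluated on the constant field `fun _ => A`. -/
def meanCurvCoeff (i : Fin 3) (μ : Bool) (m a b : Fin 3) (A : Matrix (Fin 3) (Fin 3) ℝ) : ℝ :=
  -(if a = i ∨ b = i then 0 else
    hinv (fun _ => A) i a b 0 * ∑ n, A m n * nuc (fun _ => A) i μ n 0)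

def geodCurvCoeff (i k : Fin 3) (μ : Bool) (m a b : Fin 3) (A : Matrix (Fin 3) (Fin 3) ℝ) : ℝ :=
  if a = oth i k ∧ b = oth i k then
    -(1 / A a a) * ∑ n, A m n * nubar (fun _ => A) i k μ n 0
  else 0

def defectCoeff (i : Fin 3) (μ : Bool) (m a b : Fin 3) (A : Matrix (Fin 3) (Fin 3) ℝ) : ℝ :=
  meanCurvCoeff i μ m a b A - ∑ k, if k = i then 0 else geodCurvCoeff i k μ m a b A

section Coefficients

variable (g : Pt → Matrix (Fin 3) (Fin 3) ℝ) (i k : Fin 3) (μ : Bool) (x : Pt)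

lemma meanCurv_eq_sum_coeff :
    meanCurv g i μ x = ∑ m, ∑ a, ∑ b, meanCurvCoeff i μ m a b (g x) * chris g m a b x := by
  rw [Finset.sum_comm]
  simp only [meanCurv, ← Finset.sum_neg_distrib]
  refine Finset.sum_congr rfl fun a _ => ?_
  rw [Finset.sum_comm]
  refine Finset.sum_congr rfl fun b _ => ?_
  simp only [meanCurvCoeff]
  split_ifs
  · simp
  · simp only [Finset.mul_sum, Finset.sum_mul, ← Finset.sum_neg_distrib]
    refine Finset.sum_congr rfl fun m _ => Finset.sum_congr rfl fun n _ => ?_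
    simp only [hinv, hdet, nuc]
    ring

lemma geodCurv_eq_sum_coeff :
    geodCurv g i k μ x = ∑ m, ∑ a, ∑ b, geodCurvCoeff i k μ m a b (g x) * chris g m a b x := by
  simp only [geodCurvCoeff, ite_and, ite_mul, zero_mul, Finset.sum_ite_irrel,
    Finset.sum_const_zero, Finset.sum_ite_eq', Finset.mem_univ, if_true]
  simp only [geodCurv, Finset.mul_sum, Finset.sum_mul]
  refine Finset.sum_congr rfl fun m _ => Finset.sum_congr rfl fun n _ => ?_
  simp only [nubar, hinv, hdet]
  ring

lemma meanCurv_sub_sum_geodCurv_eq :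
    meanCurv g i μ x - ∑ k, (if k = i then 0 else geodCurv g i k μ x)
      = ∑ m, ∑ a, ∑ b, defectCoeff i μ m a b (g x) * chris g m a b x := by
  have hgeod : ∀ k, (if k = i then 0 else geodCurv g i k μ x)
      = ∑ m, ∑ a, ∑ b,
          (if k = i then 0 else geodCurvCoeff i k μ m a b (g x)) * chris g m a b x := by
    intro k
    split_ifs
    · simp
    · exact geodCurv_eq_sum_coeff g i k μ x
  simp only [hgeod, meanCurv_eq_sum_coeff, defectCoeff, sub_mul, Finset.sum_sub_distrib,
    Finset.sum_mul]
  congr 1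
  rw [Finset.sum_comm]
  refine Finset.sum_congr rfl fun m _ => ?_
  rw [Finset.sum_comm]
  refine Finset.sum_congr rfl fun a _ => ?_
  rw [Finset.sum_comm]

end Coefficients

lemma lo_ne_hi (i : Fin 3) : lo i ≠ hi i := by
  revert i; decide

section Flat

variable (i k : Fin 3) (μ : Bool) (m a b n : Fin 3) (x : Pt)

lemma hdet_one : hdet (fun _ => 1) i x = 1 := by
  simp [hdet, Matrix.one_apply, lo_ne_hi]

lemma hinv_one : hinv (fun _ => 1) i a b x = if a = b then 1 else 0 := by
  unfold hinv
  split_ifs <;> simp_all [hdet_one]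

lemma nuc_one : nuc (fun _ => 1) i μ n x = sgn μ * if n = i then 1 else 0 := by
  simp [nuc, Matrix.one_apply]

lemma nubar_one (hik : i ≠ k) : nubar (fun _ => 1) i k μ n x = sgn μ * if n = i then 1 else 0 := by
  unfold nubar
  split_ifs <;> simp_all [hinv_one]

lemma meanCurvCoeff_one :
    meanCurvCoeff i μ m a b 1 = if a = b ∧ a ≠ i then -(sgn μ * if m = i then 1 else 0) else 0 := by
  simp only [meanCurvCoeff, hinv_one, nuc_one, Matrix.one_apply]
  split_ifs <;> simp_all

lemma geodCurvCoeff_one (hik : i ≠ k) : geodCurvCoeff i k μ m a b 1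
    = if a = oth i k ∧ b = oth i k then -(sgn μ * if m = i then 1 else 0) else 0 := by
  simp only [geodCurvCoeff, nubar_one i k μ _ _ hik, Matrix.one_apply]
  split_ifs <;> simp_all

lemma sum_ite_oth_eq {M : Type*} [AddCommMonoid M] (c : M) :
    ∑ k, (if k = i then 0 else if a = oth i k ∧ b = oth i k then c else 0)
      = if a = b ∧ a ≠ i then c else 0 := by
  have hoth : ∀ i a b k : Fin 3,
      (k ≠ i ∧ a = oth i k ∧ b = oth i k) ↔ (k = oth i a ∧ a = b ∧ a ≠ i) := by decide
  have key : ∀ k, (if k = i then 0 else if a = oth i k ∧ b = oth i k then c else 0)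
      = if k = oth i a then (if a = b ∧ a ≠ i then c else 0) else 0 := by
    intro k
    have := hoth i a b k
    split_ifs <;> first | rfl | tauto
  simp only [key, Finset.sum_ite_eq', Finset.mem_univ, if_true]

lemma defectCoeff_one : defectCoeff i μ m a b 1 = 0 := by
  have hgeod : ∀ k, (if k = i then 0 else geodCurvCoeff i k μ m a b 1) = if k = i then 0 else
      if a = oth i k ∧ b = oth i k then -(sgn μ * if m = i then 1 else 0) else 0 := by
    intro k
    rcases eq_or_ne k i with rfl | hki
    · simp
    · rw [if_neg hki, if_neg hki, geodCurvCoeff_one i k μ m a b hki.symm]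
  rw [defectCoeff, meanCurvCoeff_one, Finset.sum_congr rfl fun k _ => hgeod k, sum_ite_oth_eq,
    sub_self]

end Flat

section Smooth

variable (i k : Fin 3) (μ : Bool) (m a b n : Fin 3)

lemma differentiableAt_hinv_one :
    DifferentiableAt ℝ (fun A : Matrix (Fin 3) (Fin 3) ℝ => hinv (fun _ => A) i a b 0) 1 := by
  unfold hinv hdet
  split_ifs <;> fun_prop (disch := simp [Matrix.one_apply, lo_ne_hi])

lemma differentiableAt_nuc_one :
    DifferentiableAt ℝ (fun A : Matrix (Fin 3) (Fin 3) ℝ => nuc (fun _ => A) i μ n 0) 1 := by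
  have := Matrix.differentiableAt_inv (isUnit_one (M := Matrix (Fin 3) (Fin 3) ℝ))
  unfold nuc
  fun_prop (disch := simp)

lemma differentiableAt_nubar_one :
    DifferentiableAt ℝ (fun A : Matrix (Fin 3) (Fin 3) ℝ => nubar (fun _ => A) i k μ n 0) 1 := by
  have := differentiableAt_hinv_one k n i
  have := differentiableAt_hinv_one k i i
  unfold nubar
  split_ifs
  · exact differentiableAt_const _
  · fun_prop (disch := simp [hinv_one])

lemma differentiableAt_defectCoeff_one : DifferentiableAt ℝ (defectCoeff i μ m a b) 1 := by
  have hmean : DifferentiableAt ℝ (meanCurvCoeff i μ m a b) 1 := by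
    have := differentiableAt_hinv_one i a b
    have := differentiableAt_nuc_one i μ
    unfold meanCurvCoeff
    split_ifs
    · exact differentiableAt_const _
    · fun_prop
  have hgeod : ∀ k, DifferentiableAt ℝ (geodCurvCoeff i k μ m a b) 1 := by
    intro k
    have := differentiableAt_nubar_one i k μ
    unfold geodCurvCoeff
    split_ifs
    · fun_prop (disch := simp)
    · exact differentiableAt_const _
  unfold defectCoeff
  refine hmean.sub (DifferentiableAt.fun_sum fun k _ => ?_)
  split_ifs
  · exact differentiableAt_const _
  · exact hgeod k

end Smooth

lemma abs_chris_le (g : Pt → Matrix (Fin 3) (Fin 3) ℝ) (x : Pt) {δ : ℝ}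
    (hinv : ∀ m n, |(g x)⁻¹ m n| ≤ 2) (hdg : ∀ m n k, |dg g m n k x| ≤ δ) (m a b : Fin 3) :
    |chris g m a b x| ≤ 9 * δ := by
  have hterm : ∀ n, |(g x)⁻¹ m n * (dg g n a b x + dg g n b a x - dg g a b n x)| ≤ 2 * (3 * δ) := by
    intro n
    rw [abs_mul]
    refine mul_le_mul (hinv m n) ?_ (abs_nonneg _) zero_le_two
    obtain ⟨h1, h1'⟩ := abs_le.1 (hdg n a b)
    obtain ⟨h2, h2'⟩ := abs_le.1 (hdg n b a)
    obtain ⟨h3, h3'⟩ := abs_le.1 (hdg a b n)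
    exact abs_le.2 ⟨by linarith, by linarith⟩
  calc |chris g m a b x|
      = 1 / 2 * |∑ n, (g x)⁻¹ m n * (dg g n a b x + dg g n b a x - dg g a b n x)| := by
        rw [chris, abs_mul, abs_of_pos one_half_pos]
    _ ≤ 1 / 2 * (3 * (2 * (3 * δ))) := by
        gcongr
        simpa using abs_sum_le_card_mul hterm
    _ = 9 * δ := by ring

lemma exists_abs_defectCoeff_le : ∃ C > 0, ∀ᶠ A in 𝓝 (1 : Matrix (Fin 3) (Fin 3) ℝ),
    ∀ i μ m a b, |defectCoeff i μ m a b A| ≤ C * ‖A - 1‖ := by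
  let F : Matrix (Fin 3) (Fin 3) ℝ → Fin 3 → Bool → Fin 3 → Fin 3 → Fin 3 → ℝ :=
    fun A i μ m a b => defectCoeff i μ m a b A
  have hF : DifferentiableAt ℝ F 1 := by
    refine differentiableAt_pi.2 fun i => differentiableAt_pi.2 fun μ => differentiableAt_pi.2
      fun m => differentiableAt_pi.2 fun a => differentiableAt_pi.2 fun b => ?_
    exact differentiableAt_defectCoeff_one i μ m a b
  have hF1 : F 1 = 0 := by
    funext i μ m a b
    exact defectCoeff_one i μ m a b
  obtain ⟨C, hC, hbound⟩ := hF.isBigO_sub.exists_pos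
  refine ⟨C, hC, hbound.bound.mono fun A hA i μ m a b => ?_⟩
  rw [hF1, sub_zero] at hA
  calc |defectCoeff i μ m a b A| = ‖F A i μ m a b‖ := (Real.norm_eq_abs _).symm
    _ ≤ ‖F A‖ := ((((norm_le_pi_norm _ b).trans (norm_le_pi_norm _ a)).trans
        (norm_le_pi_norm _ m)).trans (norm_le_pi_norm _ μ)).trans (norm_le_pi_norm _ i)
    _ ≤ C * ‖A - 1‖ := hA

lemma eventually_abs_inv_apply_le_two :
    ∀ᶠ A in 𝓝 (1 : Matrix (Fin 3) (Fin 3) ℝ), ∀ m n, |A⁻¹ m n| ≤ 2 := by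
  have hinv := Matrix.differentiableAt_inv (isUnit_one (M := Matrix (Fin 3) (Fin 3) ℝ))
  refine eventually_all.2 fun m => eventually_all.2 fun n => ?_
  have hcont : ContinuousAt (fun A : Matrix (Fin 3) (Fin 3) ℝ => A⁻¹ m n) 1 :=
    (by fun_prop : DifferentiableAt ℝ (fun A : Matrix (Fin 3) (Fin 3) ℝ => A⁻¹ m n) 1).continuousAt
  have hlt : |(1 : Matrix (Fin 3) (Fin 3) ℝ)⁻¹ m n| < 2 := by
    rw [inv_one, Matrix.one_apply]
    split_ifs <;> norm_num
  exact (hcont.abs.tendsto.eventually_lt_const hlt).mono fun _ h => h.le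

lemma exists_abs_meanCurv_sub_sum_geodCurv_le :
    ∃ C > 0, ∃ η > 0, ∀ (g : Pt → Matrix (Fin 3) (Fin 3) ℝ) (x : Pt) (δ : ℝ), ‖g x - 1‖ < η →
      (∀ m n k, |dg g m n k x| ≤ δ) → ∀ i μ,
        |meanCurv g i μ x - ∑ k, (if k = i then 0 else geodCurv g i k μ x)|
          ≤ C * ‖g x - 1‖ * δ := by
  obtain ⟨C, hC, hcoeff⟩ := exists_abs_defectCoeff_le
  obtain ⟨η, hη, hball⟩ :=
    Metric.eventually_nhds_iff.1 (hcoeff.and eventually_abs_inv_apply_le_two)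
  refine ⟨243 * C, by positivity, η, hη, fun g x δ hx hdg i μ => ?_⟩
  obtain ⟨hA, hAinv⟩ := hball (by rwa [dist_eq_norm])
  have hterm : ∀ m a b, |defectCoeff i μ m a b (g x) * chris g m a b x|
      ≤ C * ‖g x - 1‖ * (9 * δ) := fun m a b => by
    rw [abs_mul]
    exact mul_le_mul (hA i μ m a b) (abs_chris_le g x hAinv hdg m a b) (abs_nonneg _)
      (by positivity)
  have hsum₁ : ∀ m a, |∑ b, defectCoeff i μ m a b (g x) * chris g m a b x|
      ≤ 3 * (C * ‖g x - 1‖ * (9 * δ)) := fun m a => by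
    simpa using abs_sum_le_card_mul (hterm m a)
  have hsum₂ : ∀ m, |∑ a, ∑ b, defectCoeff i μ m a b (g x) * chris g m a b x|
      ≤ 3 * (3 * (C * ‖g x - 1‖ * (9 * δ))) := fun m => by
    simpa using abs_sum_le_card_mul (hsum₁ m)
  rw [meanCurv_sub_sum_geodCurv_eq]
  calc _ ≤ 3 * (3 * (3 * (C * ‖g x - 1‖ * (9 * δ)))) := by
        simpa using abs_sum_le_card_mul hsum₂
    _ = 243 * C * ‖g x - 1‖ * δ := by ring

/-- The mean curvature of a face equals the sum of the geodesic curvatures of the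
two coordinate slicing curves through the point, up to O(L^(-2τ-1)). -/
theorem mean_curvature_as_sum_of_geodesic_curvatures (τ r₀ C₀ : ℝ) (hτ : 1/2 < τ) (hr₀ : 0 < r₀) (hC₀ : 0 < C₀)
    (g : Pt → Matrix (Fin 3) (Fin 3) ℝ) (hg : AsymptFlat τ r₀ C₀ g) :
    ∃ C > 0, ∃ L₀ > r₀, ∀ L ≥ L₀, ∀ i : Fin 3, ∀ μ : Bool,
      ∀ s : ℝ, |s| ≤ L → ∀ u : ℝ, |u| ≤ L →
        |meanCurv g i μ (facePt i (sgn μ * L) s u)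
         - ∑ k, (if k = i then 0 else geodCurv g i k μ (facePt i (sgn μ * L) s u))|
        ≤ C * L ^ (-2*τ - 1) := by
  obtain ⟨-, -, -, hg₀, hg₁, -⟩ := hg
  obtain ⟨C, hC, η, hη, hest⟩ := exists_abs_meanCurv_sub_sum_geodCurv_le
  have hτ₀ : 0 < τ := by linarith
  obtain ⟨L₁, hL₁⟩ : ∃ L₁, ∀ L ≥ L₁, 3 * (C₀ * L ^ (-τ)) < η := by
    have := ((tendsto_rpow_neg_atTop hτ₀).const_mul C₀).const_mul 3
    rw [mul_zero, mul_zero] at this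
    exact eventually_atTop.1 (this.eventually (gt_mem_nhds hη))
  refine ⟨3 * C * C₀ ^ 2, by positivity, max L₁ (r₀ + 1), by simp, fun L hL i μ s _ u _ => ?_⟩
  set x := facePt i (sgn μ * L) s u
  have hL₀ : r₀ < L := by linarith [le_max_right L₁ (r₀ + 1)]
  have hLx : L ≤ enorm3 x := le_enorm3_facePt i μ L s u
  have hrx : r₀ < enorm3 x := hL₀.trans_le hLx
  have hLpos : 0 < L := hr₀.trans hL₀
  have hdecay : ∀ p : ℝ, p ≤ 0 → C₀ * enorm3 x ^ p ≤ C₀ * L ^ p := fun p hp =>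
    mul_le_mul_of_nonneg_left (Real.rpow_le_rpow_of_nonpos hLpos hLx hp) hC₀.le
  have hmetric : ‖g x - 1‖ ≤ 3 * (C₀ * L ^ (-τ)) := by
    have hentries : ∀ m n, |(g x - 1) m n| ≤ C₀ * L ^ (-τ) := fun m n => by
      simpa [Matrix.one_apply] using (hg₀ x hrx m n).trans (hdecay _ (by linarith))
    simpa using Matrix.linfty_opNorm_le_of_abs_le _ ((abs_nonneg _).trans (hentries 0 0)) hentries
  have hdg : ∀ m n k, |dg g m n k x| ≤ C₀ * L ^ (-τ - 1) := fun m n k =>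
    (hg₁ x hrx m n k).trans (hdecay _ (by linarith))
  calc _ ≤ C * ‖g x - 1‖ * (C₀ * L ^ (-τ - 1)) :=
        hest g x _ (hmetric.trans_lt (hL₁ L (le_of_max_le_left hL))) hdg i μ
    _ ≤ C * (3 * (C₀ * L ^ (-τ))) * (C₀ * L ^ (-τ - 1)) := by gcongr
    _ = 3 * C * C₀ ^ 2 * L ^ (-2 * τ - 1) := by
        rw [show -2 * τ - 1 = -τ + (-τ - 1) by ring, Real.rpow_add hLpos]
        ring
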